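/- Let N ≥ 3 and let G_j ∈ ℝ^{R_j×I_j×R_{j+1}} for j = 1,…,N (R_{N+1} = R_1) be TR-cores. Fix n ∈ {1,…,N}. Suppose each core factors as G_j = R_j' ×_2 Q_j, where Q_j ∈ ℝ^{I_j × R_jR_{j+1}} satisfies Q_j^T Q_j = I, and suppose the subchain product V_n = R'_{n+1} ⊠_2 ⋯ ⊠_2 R'_N ⊠_2 R'_1 ⊠_2 ⋯ ⊠_2 R'_{n−1} factors as V_n = R' ×_2 Q_0, where Q_0 satisfies Q_0^T Q_0 = I. Then the mode-2 unfolding of the subchain tensor G^{≠n} = G_{n+1} ⊠_2 ⋯ ⊠_2 G_N ⊠_2 G_1 ⊠_2 ⋯ ⊠_2 G_{n−1} factors as G^{≠n}_{[2]} = Q R'_{[2]}, where Q = (Q_{n−1} ⊗ ⋯ ⊗ Q_1 ⊗ Q_N ⊗ ⋯ ⊗ Q_{n+1}) Q_0 and Q^T Q = I. -/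
import Mathlib


noncomputable section

/-- Mode-2 subchain product `A ⊠₂ B` of a tensor `A` (with third dimension `K`) and a
tensor `B` (with first dimension `K`), where `A` has middle (mode-2) dimension `J1`.
The middle index is linearized with the first factor's index varying fastest:
`(A ⊠₂ B)(i, overline{j₁ j₂}, k) = ∑_t A(i, j₁, t) B(t, j₂, k)` (0-based). -/
def sub2 (K J1 : ℕ) (A B : ℕ → ℕ → ℕ → ℝ) : ℕ → ℕ → ℕ → ℝ :=
  fun i j k => ∑ t ∈ Finset.range K, A i (j % J1) t * B t (j / J1) k

/-- `subChain J L A t = A 0 ⊠₂ A 1 ⊠₂ ⋯ ⊠₂ A t` (left-to-right iterated mode-2 subchain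
products), where `A k` is an `L k × J k × L (k+1)` tensor. -/
def subChain (J L : ℕ → ℕ) (A : ℕ → ℕ → ℕ → ℕ → ℝ) : ℕ → ℕ → ℕ → ℕ → ℝ
  | 0 => A 0
  | t + 1 => sub2 (L (t + 1)) (∏ k ∈ Finset.range (t + 1), J k) (subChain J L A t) (A (t + 1))

/-- Kronecker product `A ⊗ B` where `B` is a `p × q` matrix: the indices of the second
factor vary fastest, i.e. `(A ⊗ B)(overline{k i}, overline{l j}) = A(i,j) B(k,l)` (0-based). -/
def kron (p q : ℕ) (A B : ℕ → ℕ → ℝ) : ℕ → ℕ → ℝ :=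
  fun i j => A (i / p) (j / q) * B (i % p) (j % q)

/-- `kronChain P Q M t = M t ⊗ M (t-1) ⊗ ⋯ ⊗ M 0`, where `M k` is a `P k × Q k` matrix. -/
def kronChain (P Q : ℕ → ℕ) (M : ℕ → ℕ → ℕ → ℝ) : ℕ → ℕ → ℕ → ℝ
  | 0 => M 0
  | t + 1 =>
    kron (∏ k ∈ Finset.range (t + 1), P k) (∏ k ∈ Finset.range (t + 1), Q k)
      (M (t + 1)) (kronChain P Q M t)

open Finset in
lemma subChain_zero' (J L : ℕ → ℕ) (A : ℕ → ℕ → ℕ → ℕ → ℝ) (a w b : ℕ) :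
    subChain J L A 0 a w b = A 0 a w b := rfl

open Finset in
lemma subChain_succ' (J L : ℕ → ℕ) (A : ℕ → ℕ → ℕ → ℕ → ℝ) (t a w b : ℕ) :
    subChain J L A (t + 1) a w b =
      ∑ s ∈ range (L (t + 1)),
        subChain J L A t a (w % ∏ k ∈ range (t + 1), J k) s *
          A (t + 1) s (w / ∏ k ∈ range (t + 1), J k) b := rfl

open Finset in
lemma kronChain_zero' (P Q : ℕ → ℕ) (M : ℕ → ℕ → ℕ → ℝ) (i j : ℕ) :
    kronChain P Q M 0 i j = M 0 i j := rfl

open Finset in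
lemma kronChain_succ' (P Q : ℕ → ℕ) (M : ℕ → ℕ → ℕ → ℝ) (t i j : ℕ) :
    kronChain P Q M (t + 1) i j =
      M (t + 1) (i / ∏ k ∈ range (t + 1), P k) (j / ∏ k ∈ range (t + 1), Q k) *
        kronChain P Q M t (i % ∏ k ∈ range (t + 1), P k) (j % ∏ k ∈ range (t + 1), Q k) := rfl

open Finset in
lemma sum_range_mul_split' (m n : ℕ) (f : ℕ → ℝ) :
    ∑ i ∈ range (m * n), f i = ∑ p ∈ range n, ∑ q ∈ range m, f (q + p * m) := by
  induction n with
  | zero => simp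
  | succ n ih =>
    rw [Nat.mul_succ, Finset.sum_range_add, ih, Finset.sum_range_succ]
    congr 1
    exact Finset.sum_congr rfl fun q _ => by ring_nf

open Finset in
lemma factor_chain' (Idim J L : ℕ → ℕ) (A B : ℕ → ℕ → ℕ → ℕ → ℝ) (M : ℕ → ℕ → ℕ → ℝ)
    (T : ℕ)
    (hA : ∀ t, t ≤ T → ∀ r a s, A t r a s = ∑ p ∈ range (J t), B t r p s * M t a p) :
    ∀ a w b, subChain Idim L A T a w b =
      ∑ q ∈ range (∏ t ∈ range (T + 1), J t),
        kronChain Idim J M T w q * subChain J L B T a q b := by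
  induction T with
  | zero =>
    intro a w b
    rw [subChain_zero', hA 0 le_rfl, show (0:ℕ) + 1 = 1 from rfl, Finset.prod_range_one]
    exact Finset.sum_congr rfl fun p _ =>
      by rw [subChain_zero', kronChain_zero']; ring
  | succ T ih =>
    intro a w b
    have ih' := ih (fun t ht => hA t (ht.trans (Nat.le_succ T)))
    rw [subChain_succ', Finset.prod_range_succ (f := J), sum_range_mul_split']
    have key : ∀ p ∈ range (J (T + 1)), ∀ q ∈ range (∏ t ∈ range (T + 1), J t),
        kronChain Idim J M (T + 1) w (q + p * ∏ t ∈ range (T + 1), J t) *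
          subChain J L B (T + 1) a (q + p * ∏ t ∈ range (T + 1), J t) b =
        (M (T + 1) (w / ∏ t ∈ range (T + 1), Idim t) p *
            kronChain Idim J M T (w % ∏ t ∈ range (T + 1), Idim t) q) *
          ∑ s ∈ range (L (T + 1)), subChain J L B T a q s * B (T + 1) s p b := by
      intro p hp q hq
      simp only [mem_range] at hq
      have hpos : 0 < ∏ t ∈ range (T + 1), J t := Nat.pos_of_ne_zero (by omega)
      rw [kronChain_succ', subChain_succ',
        Nat.add_mul_div_right _ _ hpos, Nat.add_mul_mod_self_right,
        Nat.div_eq_of_lt hq, Nat.mod_eq_of_lt hq, Nat.zero_add]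
    rw [Finset.sum_congr rfl fun p hp => Finset.sum_congr rfl fun q hq => key p hp q hq]
    calc ∑ s ∈ range (L (T + 1)),
          subChain Idim L A T a (w % ∏ t ∈ range (T + 1), Idim t) s *
            A (T + 1) s (w / ∏ t ∈ range (T + 1), Idim t) b
        = ∑ s ∈ range (L (T + 1)),
            (∑ q ∈ range (∏ t ∈ range (T + 1), J t),
              kronChain Idim J M T (w % ∏ t ∈ range (T + 1), Idim t) q * subChain J L B T a q s) *
            (∑ p ∈ range (J (T + 1)), B (T + 1) s p b * M (T + 1) (w / ∏ t ∈ range (T + 1), Idim t) p) := by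
          refine Finset.sum_congr rfl fun s _ => ?_
          rw [ih', hA (T + 1) le_rfl]
      _ = _ := by
          simp only [Finset.sum_mul, Finset.mul_sum]
          rw [Finset.sum_comm]
          refine Finset.sum_congr rfl fun p _ => ?_
          rw [Finset.sum_comm]
          refine Finset.sum_congr rfl fun q _ => ?_
          exact Finset.sum_congr rfl fun s _ => by ring

open Finset in
lemma kron_orth' (Idim J : ℕ → ℕ) (M : ℕ → ℕ → ℕ → ℝ) (T : ℕ)
    (hM : ∀ t, t ≤ T → ∀ p q, p < J t → q < J t →
      (∑ a ∈ range (Idim t), M t a p * M t a q) = if p = q then (1 : ℝ) else 0) :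
    ∀ u v, u < ∏ t ∈ range (T + 1), J t → v < ∏ t ∈ range (T + 1), J t →
      (∑ w ∈ range (∏ t ∈ range (T + 1), Idim t),
        kronChain Idim J M T w u * kronChain Idim J M T w v) = if u = v then (1 : ℝ) else 0 := by
  induction T with
  | zero =>
    intro u v hu hv
    simp only [show (0:ℕ) + 1 = 1 from rfl, Finset.prod_range_one] at hu hv ⊢
    simp only [kronChain_zero']
    exact hM 0 le_rfl u v hu hv
  | succ T ih =>
    intro u v hu hv
    have ih' := ih (fun t ht => hM t (ht.trans (Nat.le_succ T)))
    rw [Finset.prod_range_succ (f := J)] at hu hv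
    have hJpos : 0 < ∏ t ∈ range (T + 1), J t := by
      rcases Nat.eq_zero_or_pos (∏ t ∈ range (T + 1), J t) with h | h
      · rw [h] at hu; omega
      · exact h
    rw [Finset.prod_range_succ (f := Idim), sum_range_mul_split']
    have step : ∀ x ∈ range (Idim (T + 1)), ∀ y ∈ range (∏ t ∈ range (T + 1), Idim t),
        kronChain Idim J M (T + 1) (y + x * ∏ t ∈ range (T + 1), Idim t) u *
          kronChain Idim J M (T + 1) (y + x * ∏ t ∈ range (T + 1), Idim t) v =
        (M (T + 1) x (u / ∏ t ∈ range (T + 1), J t) *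
            M (T + 1) x (v / ∏ t ∈ range (T + 1), J t)) *
          (kronChain Idim J M T y (u % ∏ t ∈ range (T + 1), J t) *
            kronChain Idim J M T y (v % ∏ t ∈ range (T + 1), J t)) := by
      intro x hx y hy
      simp only [mem_range] at hy
      have hIpos : 0 < ∏ t ∈ range (T + 1), Idim t := by omega
      rw [kronChain_succ', kronChain_succ',
        Nat.add_mul_div_right _ _ hIpos, Nat.add_mul_mod_self_right,
        Nat.div_eq_of_lt hy, Nat.mod_eq_of_lt hy, Nat.zero_add]
      ring
    rw [Finset.sum_congr rfl fun x hx => Finset.sum_congr rfl fun y hy => step x hx y hy]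
    have hud : u / ∏ t ∈ range (T + 1), J t < J (T + 1) :=
      Nat.div_lt_iff_lt_mul hJpos |>.mpr (by rw [mul_comm]; assumption)
    have hvd : v / ∏ t ∈ range (T + 1), J t < J (T + 1) :=
      Nat.div_lt_iff_lt_mul hJpos |>.mpr (by rw [mul_comm]; assumption)
    have hum := Nat.mod_lt u hJpos
    have hvm := Nat.mod_lt v hJpos
    calc ∑ x ∈ range (Idim (T + 1)), ∑ y ∈ range (∏ t ∈ range (T + 1), Idim t),
          (M (T + 1) x (u / ∏ t ∈ range (T + 1), J t) * M (T + 1) x (v / ∏ t ∈ range (T + 1), J t)) *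
            (kronChain Idim J M T y (u % ∏ t ∈ range (T + 1), J t) *
              kronChain Idim J M T y (v % ∏ t ∈ range (T + 1), J t))
        = (∑ x ∈ range (Idim (T + 1)),
            M (T + 1) x (u / ∏ t ∈ range (T + 1), J t) * M (T + 1) x (v / ∏ t ∈ range (T + 1), J t)) *
          (∑ y ∈ range (∏ t ∈ range (T + 1), Idim t),
            kronChain Idim J M T y (u % ∏ t ∈ range (T + 1), J t) *
              kronChain Idim J M T y (v % ∏ t ∈ range (T + 1), J t)) := by
          rw [Finset.sum_mul_sum]
      _ = (if u / ∏ t ∈ range (T + 1), J t = v / ∏ t ∈ range (T + 1), J t then (1:ℝ) else 0) *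
          (if u % ∏ t ∈ range (T + 1), J t = v % ∏ t ∈ range (T + 1), J t then (1:ℝ) else 0) := by
          rw [hM (T + 1) le_rfl _ _ hud hvd, ih' _ _ hum hvm]
      _ = if u = v then (1:ℝ) else 0 := by
          rcases eq_or_ne u v with h | h
          · simp [h]
          · have : ¬(u / ∏ t ∈ range (T + 1), J t = v / ∏ t ∈ range (T + 1), J t ∧
                u % ∏ t ∈ range (T + 1), J t = v % ∏ t ∈ range (T + 1), J t) := by
              rintro ⟨h1, h2⟩
              exact h (by rw [← Nat.div_add_mod u (∏ t ∈ range (T + 1), J t),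
                ← Nat.div_add_mod v (∏ t ∈ range (T + 1), J t), h1, h2])
            rw [if_neg h]
            rcases Decidable.not_and_iff_or_not.mp this with h' | h' <;> simp [h']

/-- **QR factorization of the unfolded subchain tensor (TR-ALS-QR).**
Let `G j ∈ ℝ^{R j × I j × R ((j+1) % N)}` (0-based, indices mod `N`) be TR-cores and fix
`n < N`.  Suppose each core factors as `G j = Rc j ×₂ Q j` with
`Q j ∈ ℝ^{I j × (R j · R (j+1))}` having orthonormal columns, and suppose the subchain
product `V_n = Rc (n+1) ⊠₂ ⋯ ⊠₂ Rc (n-1)` (cyclic) factors as `V_n = Rp ×₂ Q0` with `Q0`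
having orthonormal columns.  Then the mode-2 unfolding of the subchain tensor
`G^{≠n} = G (n+1) ⊠₂ ⋯ ⊠₂ G (n-1)` factors as `G^{≠n}_{[2]} = Q · Rp_{[2]}` where
`Q = (Q (n-1) ⊗ ⋯ ⊗ Q (n+1)) · Q0`, and `Q` has orthonormal columns (`Qᵀ Q = I`).
Both conclusions are stated entrywise; rows of `G^{≠n}_{[2]}` are the linearized
multi-index `w`, and its columns `overline{b a}` (third mode fastest) correspond to the
entry `G^{≠n}(a, w, b)`. -/
theorem tr_subchain_qr (N : ℕ) (hN : 3 ≤ N) (n : ℕ) (hn : n < N)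
    (R I : ℕ → ℕ)
    (G Rc : ℕ → ℕ → ℕ → ℕ → ℝ)
    (Q : ℕ → ℕ → ℕ → ℝ) (Q0 : ℕ → ℕ → ℝ) (Rp : ℕ → ℕ → ℕ → ℝ)
    (hG : ∀ j, j < N → ∀ r a s,
      G j r a s = ∑ p ∈ Finset.range (R j * R ((j + 1) % N)), Rc j r p s * Q j a p)
    (hQ : ∀ j, j < N → ∀ p q, p < R j * R ((j + 1) % N) → q < R j * R ((j + 1) % N) →
      (∑ a ∈ Finset.range (I j), Q j a p * Q j a q) = if p = q then (1 : ℝ) else 0)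
    (hV : ∀ a p b, a < R ((n + 1) % N) →
      p < ∏ t ∈ Finset.range (N - 1), (R ((n + 1 + t) % N) * R ((n + 2 + t) % N)) →
      b < R n →
      subChain (fun t => R ((n + 1 + t) % N) * R ((n + 2 + t) % N))
          (fun t => R ((n + 1 + t) % N)) (fun t => Rc ((n + 1 + t) % N)) (N - 2) a p b =
        ∑ q ∈ Finset.range (R ((n + 1) % N) * R n), Rp a q b * Q0 p q)
    (hQ0 : ∀ p q, p < R ((n + 1) % N) * R n → q < R ((n + 1) % N) * R n →
      (∑ t ∈ Finset.range
          (∏ u ∈ Finset.range (N - 1), (R ((n + 1 + u) % N) * R ((n + 2 + u) % N))),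
        Q0 t p * Q0 t q) = if p = q then (1 : ℝ) else 0) :
    (∀ w a b, w < ∏ t ∈ Finset.range (N - 1), I ((n + 1 + t) % N) →
      a < R ((n + 1) % N) → b < R n →
      subChain (fun t => I ((n + 1 + t) % N)) (fun t => R ((n + 1 + t) % N))
          (fun t => G ((n + 1 + t) % N)) (N - 2) a w b =
        ∑ p ∈ Finset.range (R ((n + 1) % N) * R n),
          (∑ q ∈ Finset.range
              (∏ u ∈ Finset.range (N - 1), (R ((n + 1 + u) % N) * R ((n + 2 + u) % N))),
            kronChain (fun t => I ((n + 1 + t) % N))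
              (fun t => R ((n + 1 + t) % N) * R ((n + 2 + t) % N))
              (fun t => Q ((n + 1 + t) % N)) (N - 2) w q * Q0 q p) * Rp a p b)
    ∧
    (∀ p q, p < R ((n + 1) % N) * R n → q < R ((n + 1) % N) * R n →
      (∑ w ∈ Finset.range (∏ t ∈ Finset.range (N - 1), I ((n + 1 + t) % N)),
        (∑ u ∈ Finset.range
            (∏ v ∈ Finset.range (N - 1), (R ((n + 1 + v) % N) * R ((n + 2 + v) % N))),
          kronChain (fun t => I ((n + 1 + t) % N))
            (fun t => R ((n + 1 + t) % N) * R ((n + 2 + t) % N))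
            (fun t => Q ((n + 1 + t) % N)) (N - 2) w u * Q0 u p) *
        (∑ u ∈ Finset.range
            (∏ v ∈ Finset.range (N - 1), (R ((n + 1 + v) % N) * R ((n + 2 + v) % N))),
          kronChain (fun t => I ((n + 1 + t) % N))
            (fun t => R ((n + 1 + t) % N) * R ((n + 2 + t) % N))
            (fun t => Q ((n + 1 + t) % N)) (N - 2) w u * Q0 u q)) =
        if p = q then (1 : ℝ) else 0) := by
  have hNpos : 0 < N := by omega
  have hN2 : N - 1 = N - 2 + 1 := by omega
  have hmod : ∀ t : ℕ, (n + 1 + t) % N < N := fun t => Nat.mod_lt _ hNpos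
  have hsucc : ∀ t : ℕ, ((n + 1 + t) % N + 1) % N = (n + 2 + t) % N := fun t => by
    rw [Nat.mod_add_mod, show n + 1 + t + 1 = n + 2 + t by ring]
  have hA' : ∀ t, t ≤ N - 2 → ∀ r a s,
      G ((n + 1 + t) % N) r a s =
        ∑ p ∈ Finset.range (R ((n + 1 + t) % N) * R ((n + 2 + t) % N)),
          Rc ((n + 1 + t) % N) r p s * Q ((n + 1 + t) % N) a p := by
    intro t _ r a s
    have h := hG ((n + 1 + t) % N) (hmod t) r a s
    rwa [hsucc t] at h
  have hM' : ∀ t, t ≤ N - 2 → ∀ p q,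
      p < R ((n + 1 + t) % N) * R ((n + 2 + t) % N) →
      q < R ((n + 1 + t) % N) * R ((n + 2 + t) % N) →
      (∑ a ∈ Finset.range (I ((n + 1 + t) % N)),
        Q ((n + 1 + t) % N) a p * Q ((n + 1 + t) % N) a q) = if p = q then (1 : ℝ) else 0 := by
    intro t _ p q hp hq
    exact hQ _ (hmod t) p q (by rw [hsucc t]; exact hp) (by rw [hsucc t]; exact hq)
  simp only [hN2] at hV hQ0 ⊢
  constructor
  · intro w a b hw ha hb
    have hfc := factor_chain' (fun t => I ((n + 1 + t) % N))
      (fun t => R ((n + 1 + t) % N) * R ((n + 2 + t) % N))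
      (fun t => R ((n + 1 + t) % N)) (fun t => G ((n + 1 + t) % N))
      (fun t => Rc ((n + 1 + t) % N)) (fun t => Q ((n + 1 + t) % N)) (N - 2) hA' a w b
    rw [hfc]
    rw [Finset.sum_congr rfl fun q hq => by
      rw [hV a q b ha (Finset.mem_range.mp hq) hb]]
    simp only [Finset.mul_sum, Finset.sum_mul]
    rw [Finset.sum_comm]
    exact Finset.sum_congr rfl fun p _ => Finset.sum_congr rfl fun q _ => by ring
  · intro p q hp hq
    set KK := kronChain (fun t => I ((n + 1 + t) % N))
      (fun t => R ((n + 1 + t) % N) * R ((n + 2 + t) % N))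
      (fun t => Q ((n + 1 + t) % N)) (N - 2) with hKK
    set D := ∏ v ∈ Finset.range (N - 2 + 1), (R ((n + 1 + v) % N) * R ((n + 2 + v) % N)) with hD
    set P := ∏ t ∈ Finset.range (N - 2 + 1), I ((n + 1 + t) % N) with hP
    have horth : ∀ u v, u < D → v < D →
        (∑ w ∈ Finset.range P, KK w u * KK w v) = if u = v then (1 : ℝ) else 0 :=
      kron_orth' _ _ _ _ hM'
    calc ∑ w ∈ Finset.range P,
          (∑ u ∈ Finset.range D, KK w u * Q0 u p) * (∑ u ∈ Finset.range D, KK w u * Q0 u q)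
        = ∑ u ∈ Finset.range D, ∑ v ∈ Finset.range D,
            (Q0 v p * Q0 u q) * ∑ w ∈ Finset.range P, KK w u * KK w v := by
          simp only [Finset.sum_mul, Finset.mul_sum]
          rw [Finset.sum_comm]
          refine Finset.sum_congr rfl fun u _ => ?_
          rw [Finset.sum_comm]
          exact Finset.sum_congr rfl fun v _ => Finset.sum_congr rfl fun w _ => by ring
      _ = ∑ u ∈ Finset.range D, ∑ v ∈ Finset.range D,
            (Q0 v p * Q0 u q) * if u = v then (1 : ℝ) else 0 := by
          refine Finset.sum_congr rfl fun u hu => Finset.sum_congr rfl fun v hv => ?_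
          rw [horth u v (Finset.mem_range.mp hu) (Finset.mem_range.mp hv)]
      _ = ∑ u ∈ Finset.range D, Q0 u p * Q0 u q := by
          refine Finset.sum_congr rfl fun u hu => ?_
          simp only [mul_ite, mul_one, mul_zero]
          rw [Finset.sum_ite_eq (Finset.range D) u (fun v => Q0 v p * Q0 u q), if_pos hu]
      _ = if p = q then (1 : ℝ) else 0 := hQ0 p q hp hq
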